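/- arXiv:2602.14745 — 4 statements merged into one kernel-verified Lean document; each statement's English description precedes it below -/
import Mathlib

section
/- Let G be a group with elements a, b, c, d, e, f, each of order dividing 2, satisfying the braid relations aba = bab, bdb = dbd, dfd = fdf, fef = efe, ece = cec, cac = aca, the commutation relations [a,d]=[a,e]=[a,f]=[b,c]=[b,e]=[b,f]=[d,e]=[d,c]=[c,f]=1, and the relation c·a·b·a·c = d·f·e·f·d. Then b·a·c·e·f = a·c·e·f·d in G. -/
/-!
Multiplying the claim on the left by `c * a` turns its left side into `d f e f d e f` (by the
relation `c a b a c = d f e f d`) and its right side into `e f d` (as `a² = c² = 1`). The identity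
`d f e f d e f = e f d` holds in the type `A₃` Coxeter group on `d, f, e`: the braid relations give
`f e f e = e f` and `d f d f = f d`, and `d` commutes with `e`.
-/

open scoped commutatorElement

theorem mul_mul_mul_eq_of_braid {G : Type*} [Group G] {x y : G} (hy : y ^ 2 = 1)
    (hxy : x * y * x = y * x * y) : x * y * x * y = y * x := by
  rw [hxy, mul_assoc, ← sq, hy, mul_one]

theorem coxeterA3_word_eq {G : Type*} [Group G] {d e f : G} (he : e ^ 2 = 1) (hf : f ^ 2 = 1)
    (hde : Commute d e) (hfe : f * e * f = e * f * e) (hdf : d * f * d = f * d * f) :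
    d * f * e * f * d * e * f = e * f * d := by
  calc d * f * e * f * d * e * f = d * (f * e * f * e) * d * f := by
        simp only [mul_assoc, hde.eq]
    _ = e * (d * f * d * f) := by
        rw [mul_mul_mul_eq_of_braid he hfe]; simp only [← mul_assoc, hde.eq]
    _ = e * f * d := by rw [mul_mul_mul_eq_of_braid hf hdf, mul_assoc]

theorem stmt1_general {G : Type*} [Group G] (a b c d e f : G)
    (ha : a ^ 2 = 1) (hc : c ^ 2 = 1)
    (he : e ^ 2 = 1) (hf : f ^ 2 = 1)
    (br3 : d * f * d = f * d * f) (br4 : f * e * f = e * f * e)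
    (c7 : ⁅d, e⁆ = 1)
    (hrel : c * a * b * a * c = d * f * e * f * d):
    b * a * c * e * f = a * c * e * f * d := by
  have hde : Commute d e := commutatorElement_eq_one_iff_commute.mp c7
  apply mul_left_cancel (a := c * a)
  calc c * a * (b * a * c * e * f) = c * a * b * a * c * e * f := by simp only [mul_assoc]
    _ = e * f * d := by rw [hrel, coxeterA3_word_eq he hf hde br4 br3]
    _ = c * (a * a) * c * (e * f * d) := by rw [← sq, ha, mul_one, ← sq, hc, one_mul]
    _ = c * a * (a * c * e * f * d) := by simp only [mul_assoc]

theorem stmt1 {G : Type*} [Group G] (a b c d e f : G)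
    (ha : a ^ 2 = 1) (hb : b ^ 2 = 1) (hc : c ^ 2 = 1)
    (hd : d ^ 2 = 1) (he : e ^ 2 = 1) (hf : f ^ 2 = 1)
    (br1 : a * b * a = b * a * b) (br2 : b * d * b = d * b * d)
    (br3 : d * f * d = f * d * f) (br4 : f * e * f = e * f * e)
    (br5 : e * c * e = c * e * c) (br6 : c * a * c = a * c * a)
    (c1 : ⁅a, d⁆ = 1) (c2 : ⁅a, e⁆ = 1) (c3 : ⁅a, f⁆ = 1)
    (c4 : ⁅b, c⁆ = 1) (c5 : ⁅b, e⁆ = 1) (c6 : ⁅b, f⁆ = 1)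
    (c7 : ⁅d, e⁆ = 1) (c8 : ⁅d, c⁆ = 1) (c9 : ⁅c, f⁆ = 1)
    (hrel : c * a * b * a * c = d * f * e * f * d) :
    b * a * c * e * f = a * c * e * f * d :=
  stmt1_general a b c d e f ha hc he hf br3 br4 c7 hrel
end

section
/- Let G be a group with involutions a, b, c, d, e, f satisfying the braid relations aba = bab, bdb = dbd, dfd = fdf, fef = efe, ece = cec, cac = aca, the commutations [a,d]=[a,e]=[a,f]=[b,c]=[b,e]=[b,f]=[d,e]=[d,c]=[c,f]=1, and c·a·b·a·c = d·f·e·f·d. Then all six products b·a·c·e·f, a·c·e·f·d, c·e·f·d·b, e·f·d·b·a, f·d·b·a·c, and d·b·a·c·e are equal in G. -/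
/-!
Since `a` and `c` are involutions, the relation `c a b a c = d f e f d` expresses `b` through the
other five generators. These satisfy the Coxeter relations of type `A₅` along the path
`a – c – e – f – d`, and with `b` eliminated each of the five-letter windows of the cyclic word
`b a c e f d` becomes a word identity in them, equal to `a c e f d`.
-/

open scoped commutatorElement

section Words

variable {G : Type*} [Group G]

theorem mul_mul_cancel_of_sq_eq_one {x : G} (hx : x ^ 2 = 1) (z : G) : x * (x * z) = z := by
  rw [← mul_assoc, ← sq, hx, one_mul]

theorem mul_mul_mul_eq_of_braid_s2 {x y : G} (h : x * y * x = y * x * y) (z : G) :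
    x * (y * (x * z)) = y * (x * (y * z)) := by
  simp only [← mul_assoc, h]

theorem eq_mul_mul_of_mul_mul_eq {x y b w : G} (hx : x ^ 2 = 1) (hy : y ^ 2 = 1)
    (h : y * x * b * x * y = w) : b = x * y * w * y * x := by
  have hx' := mul_mul_cancel_of_sq_eq_one hx
  have hy' := mul_mul_cancel_of_sq_eq_one hy
  rw [← h]
  simp only [mul_assoc, hx', hy']
  rw [← sq, hx, mul_one]

/- The tail `z` lets the right-associated relations above be rewritten at the end of a word. -/

variable {a b c d e f : G}

theorem bacef_mul_eq_acefd_mul (hb : b = a * c * (d * f * e * f * d) * c * a)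
    (ha : a ^ 2 = 1) (hc : c ^ 2 = 1) (he : e ^ 2 = 1) (hf : f ^ 2 = 1)
    (hdf : d * f * d = f * d * f) (hfe : f * e * f = e * f * e) (hde : Commute d e) (z : G) :
    b * a * c * e * f * z = a * c * e * f * d * z := by
  subst hb
  simp only [mul_assoc]
  rw [mul_mul_cancel_of_sq_eq_one ha, mul_mul_cancel_of_sq_eq_one hc, hde.left_comm,
    mul_mul_mul_eq_of_braid_s2 hfe, mul_mul_cancel_of_sq_eq_one he, hde.left_comm,
    mul_mul_mul_eq_of_braid_s2 hdf, mul_mul_cancel_of_sq_eq_one hf]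

theorem cefdb_mul_eq_acefd_mul (hb : b = a * c * (d * f * e * f * d) * c * a)
    (ha : a ^ 2 = 1) (hc : c ^ 2 = 1) (hd : d ^ 2 = 1) (hf : f ^ 2 = 1)
    (hec : e * c * e = c * e * c) (hca : c * a * c = a * c * a)
    (had : Commute a d) (hae : Commute a e) (haf : Commute a f)
    (hdc : Commute d c) (hcf : Commute c f) (z : G) :
    c * e * f * d * b * z = a * c * e * f * d * z := by
  subst hb
  simp only [mul_assoc]
  rw [← had.left_comm, ← haf.left_comm, ← hae.left_comm, hdc.left_comm,
    mul_mul_cancel_of_sq_eq_one hd, hcf.left_comm, mul_mul_cancel_of_sq_eq_one hf,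
    mul_mul_mul_eq_of_braid_s2 hec, hcf.left_comm, ← hdc.left_comm, mul_mul_cancel_of_sq_eq_one hc,
    ← had.left_comm, ← haf.left_comm, ← hae.left_comm, mul_mul_mul_eq_of_braid_s2 hca,
    mul_mul_cancel_of_sq_eq_one ha]

theorem efdba_mul_eq_acefd_mul (hb : b = a * c * (d * f * e * f * d) * c * a)
    (ha : a ^ 2 = 1) (hc : c ^ 2 = 1) (hd : d ^ 2 = 1) (hf : f ^ 2 = 1)
    (hec : e * c * e = c * e * c) (had : Commute a d) (hae : Commute a e) (haf : Commute a f)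
    (hdc : Commute d c) (hcf : Commute c f) (z : G) :
    e * f * d * b * a * z = a * c * e * f * d * z := by
  subst hb
  simp only [mul_assoc]
  rw [mul_mul_cancel_of_sq_eq_one ha, ← had.left_comm, ← haf.left_comm, ← hae.left_comm,
    hdc.left_comm, mul_mul_cancel_of_sq_eq_one hd, hcf.left_comm, mul_mul_cancel_of_sq_eq_one hf,
    mul_mul_mul_eq_of_braid_s2 hec, hcf.left_comm, ← hdc.left_comm, mul_mul_cancel_of_sq_eq_one hc]

theorem fdbac_mul_eq_acefd_mul (hb : b = a * c * (d * f * e * f * d) * c * a)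
    (ha : a ^ 2 = 1) (hc : c ^ 2 = 1) (hd : d ^ 2 = 1) (hf : f ^ 2 = 1)
    (had : Commute a d) (haf : Commute a f) (hdc : Commute d c) (hcf : Commute c f) (z : G) :
    f * d * b * a * c * z = a * c * e * f * d * z := by
  subst hb
  simp only [mul_assoc]
  rw [mul_mul_cancel_of_sq_eq_one ha, mul_mul_cancel_of_sq_eq_one hc, ← had.left_comm,
    ← haf.left_comm, hdc.left_comm, mul_mul_cancel_of_sq_eq_one hd, ← hcf.left_comm,
    mul_mul_cancel_of_sq_eq_one hf]

theorem dbace_mul_eq_acefd_mul (hb : b = a * c * (d * f * e * f * d) * c * a)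
    (ha : a ^ 2 = 1) (hc : c ^ 2 = 1) (hd : d ^ 2 = 1) (he : e ^ 2 = 1)
    (hfe : f * e * f = e * f * e) (had : Commute a d) (hde : Commute d e) (hdc : Commute d c)
    (z : G) :
    d * b * a * c * e * z = a * c * e * f * d * z := by
  subst hb
  simp only [mul_assoc]
  rw [mul_mul_cancel_of_sq_eq_one ha, mul_mul_cancel_of_sq_eq_one hc, ← had.left_comm,
    hde.left_comm, mul_mul_mul_eq_of_braid_s2 hfe, mul_mul_cancel_of_sq_eq_one he, hdc.left_comm,
    mul_mul_cancel_of_sq_eq_one hd]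

end Words

theorem stmt2_general {G : Type*} [Group G] (a b c d e f : G)
    (ha : a ^ 2 = 1) (hc : c ^ 2 = 1)
    (hd : d ^ 2 = 1) (he : e ^ 2 = 1) (hf : f ^ 2 = 1)
    (br3 : d * f * d = f * d * f) (br4 : f * e * f = e * f * e)
    (br5 : e * c * e = c * e * c) (br6 : c * a * c = a * c * a)
    (c1 : ⁅a, d⁆ = 1) (c2 : ⁅a, e⁆ = 1) (c3 : ⁅a, f⁆ = 1)
    (c7 : ⁅d, e⁆ = 1) (c8 : ⁅d, c⁆ = 1) (c9 : ⁅c, f⁆ = 1)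
    (hrel : c * a * b * a * c = d * f * e * f * d) :
    b * a * c * e * f = a * c * e * f * d ∧
    a * c * e * f * d = c * e * f * d * b ∧
    c * e * f * d * b = e * f * d * b * a ∧
    e * f * d * b * a = f * d * b * a * c ∧
    f * d * b * a * c = d * b * a * c * e := by
  have hb := eq_mul_mul_of_mul_mul_eq ha hc hrel
  rw [commutatorElement_eq_one_iff_commute] at c1 c2 c3 c7 c8 c9
  have h₁ := bacef_mul_eq_acefd_mul hb ha hc he hf br3 br4 c7 1
  have h₃ := cefdb_mul_eq_acefd_mul hb ha hc hd hf br5 br6 c1 c2 c3 c8 c9 1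
  have h₄ := efdba_mul_eq_acefd_mul hb ha hc hd hf br5 c1 c2 c3 c8 c9 1
  have h₅ := fdbac_mul_eq_acefd_mul hb ha hc hd hf c1 c3 c8 c9 1
  have h₆ := dbace_mul_eq_acefd_mul hb ha hc hd he br4 c1 c7 c8 1
  simp only [mul_one] at h₁ h₃ h₄ h₅ h₆
  exact ⟨h₁, h₃.symm, h₃.trans h₄.symm, h₄.trans h₅.symm, h₅.trans h₆.symm⟩

theorem stmt2 {G : Type*} [Group G] (a b c d e f : G)
    (ha : a ^ 2 = 1) (hb : b ^ 2 = 1) (hc : c ^ 2 = 1)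
    (hd : d ^ 2 = 1) (he : e ^ 2 = 1) (hf : f ^ 2 = 1)
    (br1 : a * b * a = b * a * b) (br2 : b * d * b = d * b * d)
    (br3 : d * f * d = f * d * f) (br4 : f * e * f = e * f * e)
    (br5 : e * c * e = c * e * c) (br6 : c * a * c = a * c * a)
    (c1 : ⁅a, d⁆ = 1) (c2 : ⁅a, e⁆ = 1) (c3 : ⁅a, f⁆ = 1)
    (c4 : ⁅b, c⁆ = 1) (c5 : ⁅b, e⁆ = 1) (c6 : ⁅b, f⁆ = 1)
    (c7 : ⁅d, e⁆ = 1) (c8 : ⁅d, c⁆ = 1) (c9 : ⁅c, f⁆ = 1)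
    (hrel : c * a * b * a * c = d * f * e * f * d) :
    b * a * c * e * f = a * c * e * f * d ∧
    a * c * e * f * d = c * e * f * d * b ∧
    c * e * f * d * b = e * f * d * b * a ∧
    e * f * d * b * a = f * d * b * a * c ∧
    f * d * b * a * c = d * b * a * c * e :=
  stmt2_general a b c d e f ha hc hd he hf br3 br4 br5 br6 c1 c2 c3 c7 c8 c9 hrel
end

section
/- Let n ≥ 2 and let G be a group with involutions g_1, ..., g_{2n} satisfying the braid relations g_i g_{i+1} g_i = g_{i+1} g_i g_{i+1} for i = 1, ..., 2n−1, the braid relation g_1 g_{2n} g_1 = g_{2n} g_1 g_{2n}, and [g_i, g_j] = 1 whenever i and j are not cyclically adjacent. Set γ_1 = g_3 g_4 ⋯ g_{2n} g_1, γ_{2n−1} = g_1 g_2 ⋯ g_{2n−1}, and γ_{2n} = g_2 g_3 ⋯ g_{2n}. Then γ_{2n−1} γ_1⁻¹ γ_{2n} = γ_{2n} γ_1⁻¹ γ_{2n−1} in G; equivalently γ_{2n−1} γ_1⁻¹ and γ_{2n} γ_1⁻¹ commute. -/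
/-!
Put `m = 2n`, `X = g₃ g₄ ⋯ g_{m-1}` and `c = X g_m X⁻¹`, so that `γ_{2n-1} = g₁ g₂ X`,
`γ_{2n} = g₂ X g_m` and `γ₁ = X g_m g₁`. Using that `g₁` commutes with `X` and braids with `g_m`,
one finds `γ_{2n-1} γ₁⁻¹ = g₁ g₂ g₁ c` and `γ_{2n} γ₁⁻¹ = g₂ g₁ c g₁`. Pushing `g₂` through the
chain `g₃, …, g_{m-1}` shows that `g₂` braids with `c`; as `g₁` braids with `g₂` and with `c`,
the three elements `g₁, g₂, c` pairwise braid, and for such a triangle with `g₁² = 1` the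
elements `g₁ g₂ g₁ c` and `g₂ g₁ c g₁` commute.
-/

open scoped commutatorElement

def BraidRel {M : Type*} [Mul M] (x y : M) : Prop :=
  x * y * x = y * x * y

theorem BraidRel.map {M N F : Type*} [Mul M] [Mul N] [FunLike F M N] [MulHomClass F M N]
    (f : F) {x y : M} (h : BraidRel x y) : BraidRel (f x) (f y) := by
  simp only [BraidRel, ← map_mul]
  exact congrArg f h

theorem BraidRel.conj {G : Type*} [Group G] {x y : G} (h : BraidRel x y) (z : G) :
    BraidRel (z * x * z⁻¹) (z * y * z⁻¹) := by
  simpa only [MulAut.conj_apply] using h.map (MulAut.conj z)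

section Group

variable {G : Type*} [Group G]

theorem BraidRel.inv_mul_mul_left {u a b : G} (hua : BraidRel u a) (hab : BraidRel a b)
    (hbu : Commute b u) : BraidRel (a⁻¹ * u * a) b := by
  have hv : a⁻¹ * u * a = u * a * u⁻¹ := by
    calc a⁻¹ * u * a = a⁻¹ * (u * a * u) * u⁻¹ := by group
      _ = a⁻¹ * (a * u * a) * u⁻¹ := by rw [hua]
      _ = u * a * u⁻¹ := by group
  simpa only [hv, hbu.symm.mul_inv_cancel] using hab.conj u

theorem commute_of_braidRel_triangle {a b c : G} (ha : a * a = 1) (hab : BraidRel a b)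
    (hbc : BraidRel b c) (hac : BraidRel a c) :
    Commute (a * b * a * c) (b * a * c * a) := by
  calc a * b * a * c * (b * a * c * a) = (a * b * a) * c * b * a * c * a := by group
    _ = b * a * (b * c * b) * a * c * a := by rw [hab]; group
    _ = b * a * c * b * (c * a * c) * a := by rw [hbc]; group
    _ = b * a * c * b * a * c * (a * a) := by rw [← hac]; group
    _ = b * a * c * (a * a) * b * a * c := by rw [ha]; group
    _ = b * a * c * a * (a * b * a * c) := by group

theorem cyclic_gamma_identity {x₁ x₂ xₘ X : G} (h₁ : x₁ * x₁ = 1) (hₘ : xₘ * xₘ = 1)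
    (h₁₂ : BraidRel x₁ x₂) (h₁ₘ : BraidRel x₁ xₘ) (h₁X : Commute x₁ X)
    (hu : BraidRel (X⁻¹ * x₂ * X) xₘ) :
    x₁ * x₂ * X * (X * xₘ * x₁)⁻¹ * (x₂ * X * xₘ)
      = x₂ * X * xₘ * (X * xₘ * x₁)⁻¹ * (x₁ * x₂ * X) := by
  set c := X * xₘ * X⁻¹
  have hx₁ : x₁⁻¹ = x₁ := inv_eq_of_mul_eq_one_right h₁
  have hxₘ : xₘ⁻¹ = xₘ := inv_eq_of_mul_eq_one_right hₘ
  have h₂c : BraidRel x₂ c := by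
    convert hu.conj X using 1
    group
  have h₁c : BraidRel x₁ c := by
    simpa only [h₁X.symm.mul_inv_cancel] using h₁ₘ.conj X
  have hA : x₁ * x₂ * X * (X * xₘ * x₁)⁻¹ = x₁ * x₂ * x₁ * c := by
    calc x₁ * x₂ * X * (X * xₘ * x₁)⁻¹ = x₁ * x₂ * (X * x₁) * xₘ * X⁻¹ := by
          simp only [mul_inv_rev, hx₁, hxₘ]; group
      _ = x₁ * x₂ * x₁ * c := by rw [← h₁X.eq]; simp only [c]; group
  have hB : x₂ * X * xₘ * (X * xₘ * x₁)⁻¹ = x₂ * x₁ * c * x₁ := by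
    calc x₂ * X * xₘ * (X * xₘ * x₁)⁻¹ = x₂ * X * (xₘ * x₁ * xₘ) * X⁻¹ := by
          simp only [mul_inv_rev, hx₁, hxₘ]; group
      _ = x₂ * (X * x₁) * xₘ * (x₁ * X⁻¹) := by rw [← h₁ₘ]; group
      _ = x₂ * x₁ * c * x₁ := by rw [← h₁X.eq, h₁X.inv_right.eq]; simp only [c]; group
  have key := (commute_of_braidRel_triangle h₁ h₁₂ h₂c h₁c).eq
  calc x₁ * x₂ * X * (X * xₘ * x₁)⁻¹ * (x₂ * X * xₘ)
      = x₁ * x₂ * X * (X * xₘ * x₁)⁻¹ * (x₂ * X * xₘ * (X * xₘ * x₁)⁻¹) * (X * xₘ * x₁) := by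
        group
    _ = x₂ * X * xₘ * (X * xₘ * x₁)⁻¹ * (x₁ * x₂ * X * (X * xₘ * x₁)⁻¹) * (X * xₘ * x₁) := by
        rw [hA, hB, key]
    _ = x₂ * X * xₘ * (X * xₘ * x₁)⁻¹ * (x₁ * x₂ * X) := by group

end Group

section consecProd

def consecProd {M : Type*} [Monoid M] (g : ℕ → M) (a L : ℕ) : M :=
  ((List.range L).map (fun k => g (k + a))).prod

variable {M : Type*} [Monoid M]

@[simp]
theorem consecProd_zero (g : ℕ → M) (a : ℕ) : consecProd g a 0 = 1 := rfl

theorem consecProd_succ (g : ℕ → M) (a L : ℕ) :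
    consecProd g a (L + 1) = consecProd g a L * g (L + a) := by
  simp [consecProd, List.range_succ]

theorem consecProd_succ' (g : ℕ → M) (a L : ℕ) :
    consecProd g a (L + 1) = g a * consecProd g (a + 1) L := by
  simp only [consecProd, List.range_succ_eq_map, List.map_cons, List.prod_cons, List.map_map,
    Function.comp_def, zero_add, Nat.succ_add, Nat.add_succ]

theorem Commute.consecProd_right {g : ℕ → M} {a L : ℕ} {x : M}
    (h : ∀ k < L, Commute x (g (k + a))) : Commute x (consecProd g a L) :=
  Commute.list_prod_right _ _ <| by simpa [List.mem_map, List.mem_range] using h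

end consecProd

theorem BraidRel.inv_consecProd_mul {G : Type*} [Group G] {g : ℕ → G} {x : G} {a : ℕ} (N : ℕ)
    (hx : BraidRel x (g a)) (hbr : ∀ k < N, BraidRel (g (k + a)) (g (k + a + 1)))
    (hcomm : ∀ k < N, ∀ j < k, Commute (g (k + a + 1)) (g (j + a)))
    (hxc : ∀ k < N, Commute (g (k + a + 1)) x) :
    BraidRel ((consecProd g a N)⁻¹ * x * consecProd g a N) (g (N + a)) := by
  induction N with
  | zero => simpa using hx
  | succ N ih =>
    have hX : Commute (g (N + a + 1)) (consecProd g a N) :=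
      Commute.consecProd_right fun j hj => hcomm N (by omega) j hj
    have hu := ih (fun k hk => hbr k (by omega)) (fun k hk => hcomm k (by omega))
      (fun k hk => hxc k (by omega))
    rw [consecProd_succ, Nat.add_right_comm]
    have hbu := (hX.inv_right.mul_right (hxc N (by omega))).mul_right hX
    simpa only [mul_inv_rev, mul_assoc] using hu.inv_mul_mul_left (hbr N (by omega)) hbu

theorem stmt7 {G : Type*} [Group G] (n : ℕ) (hn : 2 ≤ n) (g : ℕ → G)
    (hsq : ∀ i, 1 ≤ i → i ≤ 2 * n → (g i) ^ 2 = 1)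
    (hbr : ∀ i, 1 ≤ i → i ≤ 2 * n - 1 →
      g i * g (i + 1) * g i = g (i + 1) * g i * g (i + 1))
    (hbr1 : g 1 * g (2 * n) * g 1 = g (2 * n) * g 1 * g (2 * n))
    (hcomm : ∀ i j, 1 ≤ i → i ≤ 2 * n → 1 ≤ j → j ≤ 2 * n →
      ¬(j = i + 1 ∨ i = j + 1 ∨ (i = 1 ∧ j = 2 * n) ∨ (i = 2 * n ∧ j = 1)) →
      ⁅g i, g j⁆ = 1) :
    letI γ₁ : G := ((List.range (2 * n - 2)).map (fun k => g (k + 3))).prod * g 1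
    letI γa : G := ((List.range (2 * n - 1)).map (fun k => g (k + 1))).prod
    letI γb : G := ((List.range (2 * n - 1)).map (fun k => g (k + 2))).prod
    γa * γ₁⁻¹ * γb = γb * γ₁⁻¹ * γa := by
  obtain ⟨L, hL⟩ : ∃ L, 2 * n = L + 3 := ⟨2 * n - 3, by omega⟩
  have hsq' : ∀ i, 1 ≤ i → i ≤ 2 * n → g i * g i = 1 := fun i h₁ h₂ => by
    rw [← pow_two, hsq i h₁ h₂]
  have hcom : ∀ i j, 1 ≤ i → i + 2 ≤ j → j ≤ 2 * n → (i = 1 → j < 2 * n) →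
      Commute (g i) (g j) := fun i j h₁ h₂ h₃ h₄ =>
    commutatorElement_eq_one_iff_commute.mp <| hcomm i j h₁ (by omega) (by omega) h₃ (by omega)
  have hu : BraidRel ((consecProd g 3 L)⁻¹ * g 2 * consecProd g 3 L) (g (L + 3)) :=
    BraidRel.inv_consecProd_mul L (hbr 2 (by omega) (by omega))
      (fun k _ => hbr (k + 3) (by omega) (by omega))
      (fun k _ j _ => (hcom (j + 3) (k + 3 + 1) (by omega) (by omega) (by omega) (by omega)).symm)
      (fun k _ => (hcom 2 (k + 3 + 1) (by omega) (by omega) (by omega) (by omega)).symm)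
  show consecProd g 1 (2 * n - 1) * (consecProd g 3 (2 * n - 2) * g 1)⁻¹
      * consecProd g 2 (2 * n - 1)
    = consecProd g 2 (2 * n - 1) * (consecProd g 3 (2 * n - 2) * g 1)⁻¹
      * consecProd g 1 (2 * n - 1)
  rw [show 2 * n - 1 = L + 1 + 1 by omega, show 2 * n - 2 = L + 1 by omega, consecProd_succ' g 1,
    consecProd_succ' g 2, consecProd_succ, consecProd_succ g 2, consecProd_succ']
  rw [hL] at hsq' hbr1
  simpa only [mul_assoc] using cyclic_gamma_identity (hsq' 1 le_rfl (by omega))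
    (hsq' (L + 3) (by omega) le_rfl) (hbr 1 le_rfl (by omega)) hbr1
    (Commute.consecProd_right fun k _ => hcom 1 (k + 3) le_rfl (by omega) (by omega) (by omega)) hu
end

section
/- Let G be a group with involutions a₁, b₁, c, d₁, e₁, f₁, a₂ satisfying: the braid relations a₁b₁a₁ = b₁a₁b₁, b₁ c b₁ = c b₁ c, c e₁ c = e₁ c e₁, e₁ f₁ e₁ = f₁ e₁ f₁, f₁ d₁ f₁ = d₁ f₁ d₁, d₁ a₁ d₁ = a₁ d₁ a₁; the commutations [a₁,c]=[a₁,e₁]=[a₁,f₁]=[b₁,d₁]=[b₁,e₁]=[b₁,f₁]=[c,f₁]=[c,d₁]=[d₁,e₁]=1; the relation c a₁ b₁ a₁ c = d₁ f₁ e₁ f₁ d₁; and the additional commutations [a₂,d₁]=[a₂,f₁]=[a₂,e₁]=[a₂,a₁]=1. Then [a₂, b₁ c b₁] = 1. -/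
open scoped commutatorElement

theorem stmt8 {G : Type*} [Group G] (a₁ b₁ c d₁ e₁ f₁ a₂ : G)
    (ha₁ : a₁ ^ 2 = 1) (hb₁ : b₁ ^ 2 = 1) (hc : c ^ 2 = 1)
    (hd₁ : d₁ ^ 2 = 1) (he₁ : e₁ ^ 2 = 1) (hf₁ : f₁ ^ 2 = 1) (ha₂ : a₂ ^ 2 = 1)
    (br1 : a₁ * b₁ * a₁ = b₁ * a₁ * b₁) (br2 : b₁ * c * b₁ = c * b₁ * c)
    (br3 : c * e₁ * c = e₁ * c * e₁) (br4 : e₁ * f₁ * e₁ = f₁ * e₁ * f₁)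
    (br5 : f₁ * d₁ * f₁ = d₁ * f₁ * d₁) (br6 : d₁ * a₁ * d₁ = a₁ * d₁ * a₁)
    (c1 : ⁅a₁, c⁆ = 1) (c2 : ⁅a₁, e₁⁆ = 1) (c3 : ⁅a₁, f₁⁆ = 1)
    (c4 : ⁅b₁, d₁⁆ = 1) (c5 : ⁅b₁, e₁⁆ = 1) (c6 : ⁅b₁, f₁⁆ = 1)
    (c7 : ⁅c, f₁⁆ = 1) (c8 : ⁅c, d₁⁆ = 1) (c9 : ⁅d₁, e₁⁆ = 1)
    (hrel : c * a₁ * b₁ * a₁ * c = d₁ * f₁ * e₁ * f₁ * d₁)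
    (h1 : ⁅a₂, d₁⁆ = 1) (h2 : ⁅a₂, f₁⁆ = 1) (h3 : ⁅a₂, e₁⁆ = 1)
    (h4 : ⁅a₂, a₁⁆ = 1) :
    ⁅a₂, b₁ * c * b₁⁆ = 1 := by
  rw [commutatorElement_eq_one_iff_commute] at h1 h2 h3 h4 c1 ⊢
  have key : a₁ * (b₁ * c * b₁) * a₁ = d₁ * f₁ * e₁ * f₁ * d₁ := by
    rw [← hrel]
    have hca : c * a₁ = a₁ * c := c1.symm.eq
    calc a₁ * (b₁ * c * b₁) * a₁ = a₁ * (c * b₁ * c) * a₁ := by rw [br2]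
      _ = c * a₁ * b₁ * a₁ * c := by
          rw [show a₁ * (c * b₁ * c) * a₁ = (a₁ * c) * b₁ * (c * a₁) by group,
            hca]
          group
  have Hbig : Commute a₂ (a₁ * (b₁ * c * b₁) * a₁) := by
    rw [key]
    exact (((h1.mul_right h2).mul_right h3).mul_right h2).mul_right h1
  have := (h4.inv_right.mul_right Hbig).mul_right h4.inv_right
  rwa [show a₁⁻¹ * (a₁ * (b₁ * c * b₁) * a₁) * a₁⁻¹ = b₁ * c * b₁ by group] at this
end
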